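/- Let U, V be open neighborhoods of 0 in ℂ × ℂ, let φ = (φ₁, φ₂) : U → V be a biholomorphism with φ(0) = 0, let g be complex analytic on V, and set f := g ∘ φ. Let α : ℂ → ℂ be analytic near 0 with α(0) = 0, and assume the function ψ(y) := φ₂(α(y), y) has vanishing order exactly 1 at 0, so that ψ is a local analytic isomorphism of (ℂ,0); define β(w) := φ₁(α(ψ⁻¹(w)), ψ⁻¹(w)), so that φ(α(y), y) = (β(ψ(y)), ψ(y)) near 0. If y ↦ f_x(α(y), y) and y ↦ f_y(α(y), y) do not both vanish identically near 0, then min( ord₀(y ↦ f_x(α(y),y)), ord₀(y ↦ f_y(α(y),y)) ) = min( ord₀(w ↦ g_x(β(w),w)), ord₀(w ↦ g_y(β(w),w)) ). (The gradient order along corresponding arcs is an analytic invariant.) -/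

import Mathlib

/-!
Along the arc `γ y = (α y, y)` the chain rule gives `Df(γ y) = Dg(φ(γ y)) ∘ Dφ(γ y)` and, through
the inverse, `Dg(φ(γ y)) = Df(γ y) ∘ Dφ⁻¹(φ(γ y))`. Composing with an analytic family of linear maps
cannot lower the vanishing order, so the covector-valued functions `y ↦ Df(γ y)` and
`y ↦ Dg(φ(γ y))` have the same order, which is the minimum of the orders of their two partial
derivatives. Finally `φ(γ y) = (β(ψ y), ψ y)`, and precomposition with `ψ`, of order one,
preserves orders.
-/

open Filter

/-- The vanishing order at `0` of a function `u : ℂ → ℂ`: the least `n` such that the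
`n`-th Taylor coefficient of `u` at `0` is nonzero, in `ℕ∞` (`⊤` if none is). -/
noncomputable def ord₀ (u : ℂ → ℂ) : ℕ∞ :=
  sInf ((fun n : ℕ => (n : ℕ∞)) '' {n : ℕ | iteratedDeriv n u 0 ≠ 0})

open Topology

section AnalyticOrder

variable {𝕜 : Type*} [NontriviallyNormedField 𝕜] {E F G : Type*}
  [NormedAddCommGroup E] [NormedSpace 𝕜 E] [NormedAddCommGroup F] [NormedSpace 𝕜 F]
  [NormedAddCommGroup G] [NormedSpace 𝕜 G] {z₀ : 𝕜}

theorem AnalyticAt.clm_apply {A : 𝕜 → E →L[𝕜] F} {u : 𝕜 → E} (hA : AnalyticAt 𝕜 A z₀)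
    (hu : AnalyticAt 𝕜 u z₀) : AnalyticAt 𝕜 (fun z => A z (u z)) z₀ :=
  ((ContinuousLinearMap.id 𝕜 (E →L[𝕜] F)).analyticAt_bilinear (A z₀, u z₀)).comp₂ hA hu

theorem le_analyticOrderAt_clm_apply {A : 𝕜 → E →L[𝕜] F} {u : 𝕜 → E} (hA : AnalyticAt 𝕜 A z₀)
    (hu : AnalyticAt 𝕜 u z₀) :
    analyticOrderAt u z₀ ≤ analyticOrderAt (fun z => A z (u z)) z₀ := by
  refine ENat.forall_natCast_le_iff_le.mp fun n hn => ?_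
  obtain ⟨w, hw, hu_eq⟩ := (natCast_le_analyticOrderAt hu).mp hn
  refine (natCast_le_analyticOrderAt (hA.clm_apply hu)).mpr ⟨_, hA.clm_apply hw, ?_⟩
  filter_upwards [hu_eq] with z hz
  rw [hz, map_smul]

theorem le_analyticOrderAt_clm_comp {B : 𝕜 → F →L[𝕜] G} {A : 𝕜 → E →L[𝕜] F}
    (hB : AnalyticAt 𝕜 B z₀) (hA : AnalyticAt 𝕜 A z₀) :
    analyticOrderAt B z₀ ≤ analyticOrderAt (fun z => (B z).comp (A z)) z₀ :=
  le_analyticOrderAt_clm_apply (A := fun z => (ContinuousLinearMap.compL 𝕜 E F G).flip (A z))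
    (analyticAt_const.clm_apply hA) hB

open ContinuousLinearMap in
theorem analyticOrderAt_eq_min_apply {Γ : 𝕜 → 𝕜 × 𝕜 →L[𝕜] G} (hΓ : AnalyticAt 𝕜 Γ z₀) :
    analyticOrderAt Γ z₀ = min (analyticOrderAt (fun z => Γ z (1, 0)) z₀)
      (analyticOrderAt (fun z => Γ z (0, 1)) z₀) := by
  refine le_antisymm
    (le_min (le_analyticOrderAt_clm_apply (analyticAt_const (v := apply 𝕜 G ((1, 0) : 𝕜 × 𝕜))) hΓ)
      (le_analyticOrderAt_clm_apply (analyticAt_const (v := apply 𝕜 G ((0, 1) : 𝕜 × 𝕜))) hΓ)) ?_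
  have hΓ_eq : Γ = (fun z => smulRightL 𝕜 _ G (fst 𝕜 𝕜 𝕜) (Γ z (1, 0))) +
      fun z => smulRightL 𝕜 _ G (snd 𝕜 𝕜 𝕜) (Γ z (0, 1)) := by
    ext z : 1
    ext <;> simp
  calc _ ≤ min (analyticOrderAt (fun z => smulRightL 𝕜 _ G (fst 𝕜 𝕜 𝕜) (Γ z (1, 0))) z₀)
        (analyticOrderAt (fun z => smulRightL 𝕜 _ G (snd 𝕜 𝕜 𝕜) (Γ z (0, 1))) z₀) :=
        min_le_min (le_analyticOrderAt_clm_apply analyticAt_const (hΓ.clm_apply analyticAt_const))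
          (le_analyticOrderAt_clm_apply analyticAt_const (hΓ.clm_apply analyticAt_const))
    _ ≤ _ := le_analyticOrderAt_add
    _ = _ := by rw [← hΓ_eq]

theorem le_analyticOrderAt_fderiv_comp [CompleteSpace F] [CompleteSpace G]
    {h : F → G} {φ : E → F} {γ : 𝕜 → E}
    (hh : AnalyticAt 𝕜 h (φ (γ z₀))) (hφ : AnalyticAt 𝕜 φ (γ z₀)) (hγ : AnalyticAt 𝕜 γ z₀) :
    analyticOrderAt (fun z => fderiv 𝕜 h (φ (γ z))) z₀ ≤
      analyticOrderAt (fun z => fderiv 𝕜 (h ∘ φ) (γ z)) z₀ := by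
  have hchain : (fun z => fderiv 𝕜 (h ∘ φ) (γ z)) =ᶠ[𝓝 z₀]
      fun z => (fderiv 𝕜 h (φ (γ z))).comp (fderiv 𝕜 φ (γ z)) := by
    filter_upwards [hγ.continuousAt.tendsto.eventually hφ.eventually_analyticAt,
      (hφ.continuousAt.comp hγ.continuousAt).tendsto.eventually hh.eventually_analyticAt]
      with z hφz hhz
    exact fderiv_comp _ hhz.differentiableAt hφz.differentiableAt
  rw [analyticOrderAt_congr hchain]
  exact le_analyticOrderAt_clm_comp (hh.fderiv.comp (f := φ ∘ γ) (hφ.comp hγ)) (hφ.fderiv.comp hγ)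

theorem analyticOrderAt_fderiv_comp [CompleteSpace E] [CompleteSpace F] [CompleteSpace G]
    {g : F → G} {φ : E → F} {φinv : F → E}
    {γ : 𝕜 → E} (hg : AnalyticAt 𝕜 g (φ (γ z₀))) (hφ : AnalyticAt 𝕜 φ (γ z₀))
    (hφinv : AnalyticAt 𝕜 φinv (φ (γ z₀))) (hγ : AnalyticAt 𝕜 γ z₀)
    (hleft : φinv ∘ φ =ᶠ[𝓝 (γ z₀)] id) (hright : φ ∘ φinv =ᶠ[𝓝 (φ (γ z₀))] id) :
    analyticOrderAt (fun z => fderiv 𝕜 (g ∘ φ) (γ z)) z₀ =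
      analyticOrderAt (fun z => fderiv 𝕜 g (φ (γ z))) z₀ := by
  refine le_antisymm ?_ (le_analyticOrderAt_fderiv_comp hg hφ hγ)
  have hgφ : AnalyticAt 𝕜 (g ∘ φ) (φinv (φ (γ z₀))) := by
    rw [show φinv (φ (γ z₀)) = γ z₀ from hleft.eq_of_nhds]
    exact hg.comp hφ
  have hback : (g ∘ φ) ∘ φinv =ᶠ[𝓝 (φ (γ z₀))] g := by
    filter_upwards [hright] with q hq
    simp only [Function.comp_apply, id_eq] at hq ⊢
    rw [hq]
  calc analyticOrderAt (fun z => fderiv 𝕜 (g ∘ φ) (γ z)) z₀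
      = analyticOrderAt (fun z => fderiv 𝕜 (g ∘ φ) (φinv (φ (γ z)))) z₀ := by
        refine analyticOrderAt_congr ?_
        filter_upwards [hγ.continuousAt.tendsto.eventually hleft] with z hz
        simp only [Function.comp_apply, id_eq] at hz
        rw [hz]
    _ ≤ analyticOrderAt (fun z => fderiv 𝕜 ((g ∘ φ) ∘ φinv) (φ (γ z))) z₀ :=
        le_analyticOrderAt_fderiv_comp (γ := φ ∘ γ) hgφ hφinv (hφ.comp hγ)
    _ = analyticOrderAt (fun z => fderiv 𝕜 g (φ (γ z))) z₀ :=
        analyticOrderAt_congr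
          ((hφ.continuousAt.comp hγ.continuousAt).tendsto.eventually hback.fderiv)

end AnalyticOrder

theorem ord₀_eq_analyticOrderAt {u : ℂ → ℂ} (hu : AnalyticAt ℂ u 0) :
    ord₀ u = analyticOrderAt u 0 := by
  refine ENat.eq_of_forall_natCast_le_iff fun n => ?_
  rw [natCast_le_analyticOrderAt_iff_iteratedDeriv_eq_zero hu, ord₀, le_sInf_iff]
  simp only [Set.mem_image, Set.mem_ofPred_eq, forall_exists_index, and_imp,
    forall_apply_eq_imp_iff₂, Nat.cast_le]
  exact ⟨fun h i hi => by_contra fun hne => (h i hne).not_gt hi,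
    fun h m hm => not_lt.mp fun hmn => hm (h m hmn)⟩

theorem min_ord₀_apply_eq_analyticOrderAt {Γ : ℂ → ℂ × ℂ →L[ℂ] ℂ} (hΓ : AnalyticAt ℂ Γ 0) :
    min (ord₀ fun z => Γ z (1, 0)) (ord₀ fun z => Γ z (0, 1)) = analyticOrderAt Γ 0 := by
  rw [ord₀_eq_analyticOrderAt (hΓ.clm_apply analyticAt_const),
    ord₀_eq_analyticOrderAt (hΓ.clm_apply analyticAt_const), analyticOrderAt_eq_min_apply hΓ]

theorem deriv_ne_zero_of_ord₀_eq_one {u : ℂ → ℂ} (hu : AnalyticAt ℂ u 0) (h : ord₀ u = 1) :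
    deriv u 0 ≠ 0 := by
  rw [ord₀_eq_analyticOrderAt hu, ← Nat.cast_one,
    analyticOrderAt_eq_nat_iff_iteratedDeriv_eq_zero hu] at h
  simpa using h.2

theorem gradient_order_analytic_invariant_general
    (U V : Set (ℂ × ℂ)) (hUopen : IsOpen U) (hVopen : IsOpen V)
    (h0U : ((0 : ℂ), (0 : ℂ)) ∈ U) (h0V : ((0 : ℂ), (0 : ℂ)) ∈ V)
    (φ φinv : ℂ × ℂ → ℂ × ℂ)
    (hφ : ∀ p ∈ U, AnalyticAt ℂ φ p) (hφinv : ∀ p ∈ V, AnalyticAt ℂ φinv p)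
    (hleft : ∀ p ∈ U, φinv (φ p) = p) (hright : ∀ p ∈ V, φ (φinv p) = p)
    (hφ0 : φ (0, 0) = (0, 0))
    (g : ℂ × ℂ → ℂ) (hg : ∀ p ∈ V, AnalyticAt ℂ g p)
    (f : ℂ × ℂ → ℂ) (hf : f = g ∘ φ)
    (α : ℂ → ℂ) (hα : AnalyticAt ℂ α 0) (hα0 : α 0 = 0)
    (ψ : ℂ → ℂ) (hψ : ψ = fun y => (φ (α y, y)).2)
    (hψord : ord₀ ψ = 1)
    (ψinv : ℂ → ℂ)
    (hψleft : ∀ᶠ y in nhds (0 : ℂ), ψinv (ψ y) = y)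
    (β : ℂ → ℂ) (hβ : β = fun w => (φ (α (ψinv w), ψinv w)).1) :
    min (ord₀ (fun y => fderiv ℂ f (α y, y) (1, 0)))
        (ord₀ (fun y => fderiv ℂ f (α y, y) (0, 1)))
      = min (ord₀ (fun w => fderiv ℂ g (β w, w) (1, 0)))
            (ord₀ (fun w => fderiv ℂ g (β w, w) (0, 1))) := by
  subst hf
  have hγ : AnalyticAt ℂ (fun y => (α y, y)) 0 := hα.prod analyticAt_id
  have hγ0 : (α 0, (0 : ℂ)) = (0, 0) := by rw [hα0]
  have hφγ0 : φ (α 0, 0) = (0, 0) := by rw [hγ0, hφ0]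
  have hφ_at : AnalyticAt ℂ φ (α 0, 0) := hγ0 ▸ hφ _ h0U
  have hg_at : AnalyticAt ℂ g (φ (α 0, 0)) := hφγ0 ▸ hg _ h0V
  have hφinv_at : AnalyticAt ℂ φinv (φ (α 0, 0)) := hφγ0 ▸ hφinv _ h0V
  have hleft_at : φinv ∘ φ =ᶠ[𝓝 (α 0, 0)] id := hγ0 ▸ eventually_of_mem (hUopen.mem_nhds h0U) hleft
  have hright_at : φ ∘ φinv =ᶠ[𝓝 (φ (α 0, 0))] id :=
    hφγ0 ▸ eventually_of_mem (hVopen.mem_nhds h0V) hright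
  have hφγ : AnalyticAt ℂ (fun y => φ (α y, y)) 0 := hφ_at.comp (f := fun y => (α y, y)) hγ
  have hψa : AnalyticAt ℂ ψ 0 := hψ ▸ analyticAt_snd.comp hφγ
  have hψ0 : ψ 0 = 0 := by simp [hψ, hα0, hφ0]
  have hψ' : deriv ψ 0 ≠ 0 := deriv_ne_zero_of_ord₀_eq_one hψa hψord
  have hφ_arc : (fun y => fderiv ℂ g (φ (α y, y))) =ᶠ[𝓝 0] (fun w => fderiv ℂ g (β w, w)) ∘ ψ := by
    filter_upwards [hψleft] with y hy
    simp only [Function.comp_apply, hβ, hy]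
    simp [hψ]
  have hΓf : AnalyticAt ℂ (fun y => fderiv ℂ (g ∘ φ) (α y, y)) 0 :=
    (hg_at.comp hφ_at).fderiv.comp (f := fun y => (α y, y)) hγ
  have hΓg : AnalyticAt ℂ (fun w => fderiv ℂ g (β w, w)) 0 := by
    rw [← hψ0, ← analyticAt_comp_iff_of_deriv_ne_zero hψa hψ']
    exact (hg_at.fderiv.comp (f := fun y => φ (α y, y)) hφγ).congr hφ_arc
  rw [min_ord₀_apply_eq_analyticOrderAt hΓf, min_ord₀_apply_eq_analyticOrderAt hΓg,
    analyticOrderAt_fderiv_comp (γ := fun y => (α y, y)) hg_at hφ_at hφinv_at hγ hleft_at hright_at,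
    analyticOrderAt_congr hφ_arc, analyticOrderAt_comp_of_deriv_ne_zero hψa hψ', hψ0]

/-- Let `φ = (φ₁,φ₂) : U → V` be a biholomorphism between neighbourhoods
of `0 ∈ ℂ × ℂ` with `φ(0) = 0`, `g` analytic on `V`, and `f := g ∘ φ`. Let `α` be an
arc analytic near `0` with `α(0)=0`, suppose `ψ(y) := φ₂(α(y),y)` has vanishing order
exactly `1` at `0` (so it has a local analytic inverse `ψ⁻¹`), and let
`β(w) := φ₁(α(ψ⁻¹(w)), ψ⁻¹(w))`, so that `φ(α(y),y) = (β(ψ(y)), ψ(y))` near `0`.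
If `f_x` and `f_y` do not both vanish identically along `α`, then the gradient order of
`f` along `α` equals the gradient order of `g` along `β`. -/
theorem gradient_order_analytic_invariant
    (U V : Set (ℂ × ℂ)) (hUopen : IsOpen U) (hVopen : IsOpen V)
    (h0U : ((0 : ℂ), (0 : ℂ)) ∈ U) (h0V : ((0 : ℂ), (0 : ℂ)) ∈ V)
    (φ φinv : ℂ × ℂ → ℂ × ℂ)
    (hφ : ∀ p ∈ U, AnalyticAt ℂ φ p) (hφinv : ∀ p ∈ V, AnalyticAt ℂ φinv p)
    (hφUV : Set.MapsTo φ U V) (hφinvVU : Set.MapsTo φinv V U)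
    (hleft : ∀ p ∈ U, φinv (φ p) = p) (hright : ∀ p ∈ V, φ (φinv p) = p)
    (hφ0 : φ (0, 0) = (0, 0))
    (g : ℂ × ℂ → ℂ) (hg : ∀ p ∈ V, AnalyticAt ℂ g p)
    (f : ℂ × ℂ → ℂ) (hf : f = g ∘ φ)
    (α : ℂ → ℂ) (hα : AnalyticAt ℂ α 0) (hα0 : α 0 = 0)
    (ψ : ℂ → ℂ) (hψ : ψ = fun y => (φ (α y, y)).2)
    (hψord : ord₀ ψ = 1)
    (ψinv : ℂ → ℂ) (hψinv : AnalyticAt ℂ ψinv 0) (hψinv0 : ψinv 0 = 0)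
    (hψleft : ∀ᶠ y in nhds (0 : ℂ), ψinv (ψ y) = y)
    (hψright : ∀ᶠ w in nhds (0 : ℂ), ψ (ψinv w) = w)
    (β : ℂ → ℂ) (hβ : β = fun w => (φ (α (ψinv w), ψinv w)).1)
    (hne : ¬ ((∀ᶠ y in nhds (0 : ℂ), fderiv ℂ f (α y, y) (1, 0) = 0) ∧
              (∀ᶠ y in nhds (0 : ℂ), fderiv ℂ f (α y, y) (0, 1) = 0))) :
    min (ord₀ (fun y => fderiv ℂ f (α y, y) (1, 0)))
        (ord₀ (fun y => fderiv ℂ f (α y, y) (0, 1)))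
      = min (ord₀ (fun w => fderiv ℂ g (β w, w) (1, 0)))
            (ord₀ (fun w => fderiv ℂ g (β w, w) (0, 1))) :=
  gradient_order_analytic_invariant_general U V hUopen hVopen h0U h0V φ φinv hφ hφinv hleft hright
    hφ0 g hg f hf α hα hα0 ψ hψ hψord ψinv hψleft β hβ
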